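/- arXiv:1810.04097 — 2 statements merged into one kernel-verified Lean document; each statement's English description precedes it below -/
import Mathlib

section
/- Let c > 0, a ∈ ℝ, and let g : [s, t] → ℝ be continuous and satisfy g(s₂) − g(s₁) ≤ ∫_{s₁}^{s₂} (a − c·g(σ)) dσ for all s ≤ s₁ ≤ s₂ ≤ t. Then g(s₂) ≤ e^{−c(s₂−s₁)} g(s₁) + (a/c)(1 − e^{−c(s₂−s₁)}) for all s ≤ s₁ ≤ s₂ ≤ t; in particular g(s₂) ≤ max(g(s₁), a/c). -/
/-!
The integral inequality bounds the lower right Dini derivative of `g` by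
`a - c g`, so Mathlib's Grönwall comparison bounds `g s₂` by the solution of `y' = a - c y`
with `y s₁ = g s₁`, which is the stated exponential bound. That bound is a convex combination
of `g s₁` and `a / c`, hence at most their maximum.
-/

open Filter Set Topology

theorem frequently_slope_lt_of_sub_le_integral {f g : ℝ → ℝ} {x b r : ℝ} (hxb : x < b)
    (hf : ContinuousOn f (Icc x b)) (hg : ∀ z ∈ Ioc x b, g z - g x ≤ ∫ σ in x..z, f σ)
    (hr : f x < r) : ∃ᶠ z in 𝓝[>] x, (z - x)⁻¹ * (g z - g x) < r := by
  have hIcc : Icc x b ∈ 𝓝[>] x := Icc_mem_nhdsGT hxb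
  have hderiv : HasDerivWithinAt (fun z => ∫ σ in x..z, f σ) (f x) (Ici x) x :=
    intervalIntegral.integral_hasDerivWithinAt_right (by simp)
      ((hf.stronglyMeasurableAtFilter_nhdsWithin measurableSet_Icc x).filter_mono
        (nhdsWithin_le_of_mem hIcc))
      ((hf x (left_mem_Icc.2 hxb.le)).mono_of_mem_nhdsWithin hIcc)
  have hslope : ∀ᶠ z in 𝓝[>] x, (z - x)⁻¹ * (∫ σ in x..z, f σ) < r := by
    have := (hasDerivWithinAt_iff_tendsto_slope' (lt_irrefl x)).1
      (hderiv.mono Ioi_subset_Ici_self)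
    filter_upwards [this.eventually (gt_mem_nhds hr)] with z hz
    simpa [slope_def_field, div_eq_inv_mul] using hz
  refine (hslope.and (Ioc_mem_nhdsGT hxb)).frequently.mono ?_
  rintro z ⟨hz, hzI⟩
  calc (z - x)⁻¹ * (g z - g x) ≤ (z - x)⁻¹ * (∫ σ in x..z, f σ) :=
        mul_le_mul_of_nonneg_left (hg z hzI) (inv_nonneg.2 (sub_nonneg.2 hzI.1.le))
    _ < r := hz

theorem le_gronwallBound_of_sub_le_integral {f g : ℝ → ℝ} {a b K ε : ℝ}
    (hf : ContinuousOn f (Icc a b)) (hg : ContinuousOn g (Icc a b))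
    (hint : ∀ x z, a ≤ x → x ≤ z → z ≤ b → g z - g x ≤ ∫ σ in x..z, f σ)
    (hbound : ∀ x ∈ Icc a b, f x ≤ K * g x + ε) :
    ∀ x ∈ Icc a b, g x ≤ gronwallBound (g a) K ε (x - a) :=
  le_gronwallBound_of_liminf_deriv_right_le hg
    (fun x hx _ hr => frequently_slope_lt_of_sub_le_integral hx.2
      (hf.mono (Icc_subset_Icc_left hx.1)) (fun z hz => hint x z hx.1 hz.1.le hz.2) hr)
    le_rfl (fun x hx => hbound x (Ico_subset_Icc_self hx))

theorem mul_add_mul_one_sub_le_max {θ x y : ℝ} (h0 : 0 ≤ θ) (h1 : θ ≤ 1) :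
    θ * x + y * (1 - θ) ≤ max x y := by
  nlinarith [le_max_left x y, le_max_right x y]

theorem stmt_7 (s t a c : ℝ) (hc : 0 < c) (g : ℝ → ℝ)
    (hg : ContinuousOn g (Set.Icc s t))
    (hint : ∀ s₁ s₂, s ≤ s₁ → s₁ ≤ s₂ → s₂ ≤ t →
      g s₂ - g s₁ ≤ ∫ σ in s₁..s₂, (a - c * g σ)) :
    ∀ s₁ s₂, s ≤ s₁ → s₁ ≤ s₂ → s₂ ≤ t →
      g s₂ ≤ Real.exp (-c * (s₂ - s₁)) * g s₁ +
        (a / c) * (1 - Real.exp (-c * (s₂ - s₁))) ∧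
      g s₂ ≤ max (g s₁) (a / c) := by
  intro s₁ s₂ hs₁ h₁₂ hs₂
  have hsub : Icc s₁ t ⊆ Icc s t := Icc_subset_Icc_left hs₁
  have hgronwall := le_gronwallBound_of_sub_le_integral (f := fun σ => a - c * g σ) (K := -c) (ε := a)
    ((continuousOn_const.sub (continuousOn_const.mul hg)).mono hsub) (hg.mono hsub)
    (fun x z hx hxz hz => hint x z (hs₁.trans hx) hxz hz) (fun x _ => by linarith) s₂ ⟨h₁₂, hs₂⟩
  have hbound : g s₂ ≤ Real.exp (-c * (s₂ - s₁)) * g s₁ +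
      (a / c) * (1 - Real.exp (-c * (s₂ - s₁))) := by
    rw [gronwallBound_of_K_ne_0 (neg_ne_zero.2 hc.ne')] at hgronwall
    convert hgronwall using 2
    field_simp
    ring
  refine ⟨hbound, hbound.trans ?_⟩
  exact mul_add_mul_one_sub_le_max (Real.exp_pos _).le
    (Real.exp_le_one_iff.2 (by nlinarith))
end

section
/- Let h : ℝ → ℝ be continuous and locally Lipschitz, c₀ > 0, b > 0, and let β : [0, b] → ℝ be continuous and satisfy β(s₂) − β(s₁) ≤ −c₀ ∫_{s₁}^{s₂} h(β(σ)) dσ for all 0 ≤ s₁ ≤ s₂ ≤ b. Let y be the solution of the Cauchy problem y'(r) = −c₀ h(y(r)) for r ≥ 0 with y(0) = β(0), and assume y exists on [0, b]. Then β(r) ≤ y(r) for every r ∈ [0, b]. -/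
set_option maxHeartbeats 1000000 in
theorem stmt_8 (h : ℝ → ℝ) (hcont : Continuous h) (hlip : LocallyLipschitz h)
    (c₀ b : ℝ) (hc₀ : 0 < c₀) (hb : 0 < b)
    (β : ℝ → ℝ) (hβ : ContinuousOn β (Set.Icc 0 b))
    (hineq : ∀ s₁ s₂, 0 ≤ s₁ → s₁ ≤ s₂ → s₂ ≤ b →
      β s₂ - β s₁ ≤ -c₀ * ∫ σ in s₁..s₂, h (β σ))
    (y : ℝ → ℝ) (hy0 : y 0 = β 0)
    (hyode : ∀ r ∈ Set.Icc (0:ℝ) b, HasDerivAt y (-c₀ * h (y r)) r) :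
    ∀ r ∈ Set.Icc (0:ℝ) b, β r ≤ y r := by
  classical
  -- clamp β to get a globally continuous integrand
  have hπcont : Continuous (fun σ : ℝ => min (max σ 0) b) := by continuity
  have hπmem : ∀ σ : ℝ, min (max σ 0) b ∈ Set.Icc 0 b := fun σ =>
    ⟨le_min (le_max_right _ _) hb.le, min_le_right _ _⟩
  have hπeq : ∀ σ ∈ Set.Icc (0:ℝ) b, min (max σ 0) b = σ := fun σ hσ => by
    rw [max_eq_left hσ.1, min_eq_left hσ.2]
  set G : ℝ → ℝ := fun σ => h (β (min (max σ 0) b)) with hGdef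
  have hGcont : Continuous G := hcont.comp (hβ.comp_continuous hπcont hπmem)
  have hGeq : ∀ σ ∈ Set.Icc (0:ℝ) b, G σ = h (β σ) := fun σ hσ => by
    simp only [hGdef, hπeq σ hσ]
  have hycont : ContinuousOn y (Set.Icc 0 b) := fun r hr =>
    (hyode r hr).continuousAt.continuousWithinAt
  -- integral inequality restated with G
  have hineq' : ∀ s₁ s₂, 0 ≤ s₁ → s₁ ≤ s₂ → s₂ ≤ b →
      β s₂ - β s₁ ≤ -c₀ * ∫ σ in s₁..s₂, G σ := by
    intro s₁ s₂ h0 h12 h2b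
    have hEq : (∫ σ in s₁..s₂, G σ) = ∫ σ in s₁..s₂, h (β σ) := by
      apply intervalIntegral.integral_congr
      intro σ hσ
      rw [Set.uIcc_of_le h12] at hσ
      exact hGeq σ ⟨le_trans h0 hσ.1, le_trans hσ.2 h2b⟩
    rw [hEq]
    exact hineq s₁ s₂ h0 h12 h2b
  -- slope estimate for β - y
  have hslope : ∀ x ∈ Set.Ico (0:ℝ) b, ∀ r,
      -c₀ * h (β x) + c₀ * h (y x) < r →
      ∃ᶠ z in nhdsWithin x (Set.Ioi x), slope (fun t => β t - y t) x z < r := by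
    intro x hx r hr
    apply Filter.Eventually.frequently
    set F : ℝ → ℝ := fun z => ∫ σ in x..z, G σ with hFdef
    have hxmem : x ∈ Set.Icc (0:ℝ) b := ⟨hx.1, hx.2.le⟩
    have hFd : HasDerivAt F (G x) x := (hGcont.integral_hasStrictDerivAt x x).hasDerivAt
    have hFslope : Filter.Tendsto (slope F x) (nhdsWithin x {x}ᶜ) (nhds (G x)) :=
      hasDerivAt_iff_tendsto_slope.1 hFd
    have hyslope : Filter.Tendsto (slope y x) (nhdsWithin x {x}ᶜ) (nhds (-c₀ * h (y x))) :=
      hasDerivAt_iff_tendsto_slope.1 (hyode x hxmem)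
    have hlim : Filter.Tendsto (fun z => -c₀ * slope F x z - slope y x z) (nhdsWithin x {x}ᶜ)
        (nhds (-c₀ * h (β x) + c₀ * h (y x))) := by
      have h1 := (hFslope.const_mul (-c₀)).sub hyslope
      have h2 : -c₀ * G x - -c₀ * h (y x) = -c₀ * h (β x) + c₀ * h (y x) := by
        rw [hGeq x hxmem]; ring
      rwa [h2] at h1
    have h1 : ∀ᶠ z in nhdsWithin x {x}ᶜ, -c₀ * slope F x z - slope y x z < r :=
      hlim.eventually_lt_const hr
    have h2 : ∀ᶠ z in nhdsWithin x (Set.Ioi x), -c₀ * slope F x z - slope y x z < r :=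
      h1.filter_mono (nhdsWithin_mono x (fun z hz => Set.mem_compl_singleton_iff.2 (ne_of_gt hz)))
    have h3 : ∀ᶠ z in nhdsWithin x (Set.Ioi x), z ∈ Set.Ioc x b :=
      Ioc_mem_nhdsGT_of_mem ⟨le_rfl, hx.2⟩
    filter_upwards [h2, h3] with z hzr hzb
    have hzx : 0 < z - x := sub_pos.2 hzb.1
    have hβz : β z - β x ≤ -c₀ * F z := hineq' x z hx.1 hzb.1.le hzb.2
    have hFx : F x = 0 := intervalIntegral.integral_same
    calc slope (fun t => β t - y t) x z
        = (β z - β x) / (z - x) - (y z - y x) / (z - x) := by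
          rw [slope_def_field]; ring
      _ ≤ (-c₀ * F z) / (z - x) - (y z - y x) / (z - x) := by
          gcongr
      _ = -c₀ * slope F x z - slope y x z := by
          rw [slope_def_field, slope_def_field, hFx]; ring
      _ < r := hzr
  -- the set where the comparison holds
  set s : Set ℝ := {z | z ∈ Set.Icc (0:ℝ) b ∧ β z ≤ y z} with hsdef
  have hclosed : IsClosed (s ∩ Set.Icc 0 b) := by
    have hEq : s ∩ Set.Icc (0:ℝ) b
        = Set.Icc (0:ℝ) b ∩ (fun z => β z - y z) ⁻¹' Set.Iic 0 := by
      ext z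
      simp only [hsdef, Set.mem_inter_iff, Set.mem_setOf_eq, Set.mem_preimage, Set.mem_Iic,
        sub_nonpos]
      tauto
    rw [hEq]
    exact (hβ.sub hycont).preimage_isClosed_of_isClosed isClosed_Icc isClosed_Iic
  have hmain : Set.Icc (0:ℝ) b ⊆ s := by
    apply hclosed.Icc_subset_of_forall_exists_gt
    · exact ⟨Set.left_mem_Icc.2 hb.le, hy0.ge⟩
    · rintro x ⟨⟨hxIcc, hxle⟩, hxIco⟩ w hw
      obtain ⟨K, t, ht, hK⟩ := hlip (y x)
      obtain ⟨ε, hε, hball⟩ := Metric.mem_nhds_iff.1 ht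
      set c : ℝ := c₀ * (K : ℝ) + 1 with hcdef
      have hKnn : (0:ℝ) ≤ (K : ℝ) := K.coe_nonneg
      have hcpos : (0:ℝ) < c := by positivity
      have hyc : ContinuousAt y x := (hyode x hxIcc).continuousAt
      obtain ⟨δ, hδ, hδy⟩ := Metric.continuousAt_iff.1 hyc (ε / 2) (by positivity)
      set b' : ℝ := min (x + δ / 2) b with hb'def
      have hxb' : x < b' := lt_min (by linarith) hxIco.2
      have hb'le : b' ≤ b := min_le_right _ _
      have hsub : Set.Icc x b' ⊆ Set.Icc 0 b := fun z hz =>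
        ⟨le_trans hxIco.1 hz.1, le_trans hz.2 hb'le⟩
      have hyball : ∀ z ∈ Set.Icc x b', dist (y z) (y x) < ε / 2 := by
        intro z hz
        apply hδy
        rw [Real.dist_eq, abs_of_nonneg (sub_nonneg.2 hz.1)]
        have hz2 : z ≤ x + δ / 2 := le_trans hz.2 (min_le_left _ _)
        linarith
      -- fencing argument, for every small ε'
      have key : ∀ ε' : ℝ, 0 < ε' → ε' ≤ ε / (2 * Real.exp (c * b)) →
          ∀ z ∈ Set.Icc x b', β z - y z ≤ ε' * Real.exp (c * (z - x)) := by
        intro ε' hε' hε'le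
        have hres := image_le_of_liminf_slope_right_lt_deriv_boundary'
          (f := fun z => β z - y z) (f' := fun z => -c₀ * h (β z) + c₀ * h (y z))
          (a := x) (b := b')
          (B := fun z => ε' * Real.exp (c * (z - x)))
          (B' := fun z => ε' * (Real.exp (c * (z - x)) * c))
          ((hβ.sub hycont).mono hsub)
          (fun z hz r hr => hslope z ⟨le_trans hxIco.1 hz.1, lt_of_lt_of_le hz.2 hb'le⟩ r hr)
          (by simp only [sub_self, mul_zero, Real.exp_zero, mul_one]; linarith [sub_nonpos.2 hxle])
          ((continuous_const.mul (Real.continuous_exp.comp (continuous_const.mul (continuous_id.sub continuous_const)))).continuousOn)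
          ?_ ?_
        · exact fun z hz => hres hz
        · -- derivative of the barrier
          intro z _
          have h1 : HasDerivAt (fun z : ℝ => c * (z - x)) (c * 1) z :=
            ((hasDerivAt_id z).sub_const x).const_mul c
          have h2 := (h1.exp).const_mul ε'
          simp only [mul_one] at h2 ⊢
          exact h2.hasDerivWithinAt
        · -- bound at contact points
          intro z hz hcontact
          have hcontact' : β z - y z = ε' * Real.exp (c * (z - x)) := hcontact
          have hzIcc : z ∈ Set.Icc x b' := ⟨hz.1, hz.2.le⟩
          have hBpos : 0 < ε' * Real.exp (c * (z - x)) := by positivity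
          have hyz : dist (y z) (y x) < ε / 2 := hyball z hzIcc
          have hyt : y z ∈ t := hball (by
            rw [Metric.mem_ball]; linarith)
          have hzb : z ≤ b := le_trans hzIcc.2 hb'le
          have hzge : 0 ≤ z := le_trans hxIco.1 hz.1
          have hexple : Real.exp (c * (z - x)) ≤ Real.exp (c * b) := by
            apply Real.exp_le_exp.2
            have hzxb : z - x ≤ b := by linarith [hxIcc.1]
            nlinarith
          have hBle : ε' * Real.exp (c * (z - x)) ≤ ε / 2 := by
            have hexppos : (0:ℝ) < Real.exp (c * b) := Real.exp_pos _
            calc ε' * Real.exp (c * (z - x)) ≤ (ε / (2 * Real.exp (c * b))) * Real.exp (c * b) := by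
                  apply mul_le_mul hε'le hexple (Real.exp_pos _).le
                  positivity
              _ = ε / 2 := by field_simp
          have hβt : β z ∈ t := by
            apply hball
            rw [Metric.mem_ball, Real.dist_eq]
            have hβzeq : β z = y z + ε' * Real.exp (c * (z - x)) := by linarith [hcontact']
            calc |β z - y x| = |(y z - y x) + ε' * Real.exp (c * (z - x))| := by
                  rw [hβzeq]; ring_nf
              _ ≤ |y z - y x| + |ε' * Real.exp (c * (z - x))| := abs_add_le _ _
              _ < ε / 2 + ε / 2 := by
                  rw [abs_of_pos hBpos]
                  have := (Real.dist_eq (y z) (y x)) ▸ hyz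
                  exact add_lt_add_of_lt_of_le this hBle
              _ = ε := by ring
          have hdist : dist (h (β z)) (h (y z)) ≤ K * dist (β z) (y z) :=
            hK.dist_le_mul _ hβt _ hyt
          rw [Real.dist_eq, Real.dist_eq, hcontact', abs_of_pos hBpos] at hdist
          have habs : -(h (β z) - h (y z)) ≤ |h (β z) - h (y z)| := neg_le_abs _
          have hmul : -c₀ * h (β z) + c₀ * h (y z)
              ≤ c₀ * ((K : ℝ) * (ε' * Real.exp (c * (z - x)))) := by
            nlinarith
          have hlt : c₀ * ((K : ℝ) * (ε' * Real.exp (c * (z - x))))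
              < ε' * (Real.exp (c * (z - x)) * c) := by
            rw [hcdef]; nlinarith
          show -c₀ * h (β z) + c₀ * h (y z) < ε' * (Real.exp (c * (z - x)) * c)
          exact lt_of_le_of_lt hmul hlt
      -- pass to the limit ε' → 0
      have hle : ∀ z ∈ Set.Icc x b', β z ≤ y z := by
        intro z hz
        by_contra hlt
        push_neg at hlt
        have hdpos : 0 < β z - y z := sub_pos.2 hlt
        set E : ℝ := Real.exp (c * (z - x)) with hEdef
        have hEpos : 0 < E := Real.exp_pos _
        set ε' : ℝ := min (ε / (2 * Real.exp (c * b))) ((β z - y z) / (2 * E)) with hε'def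
        have hε'pos : 0 < ε' := lt_min (by positivity) (by positivity)
        have h1 := key ε' hε'pos (min_le_left _ _) z hz
        have h2 : ε' * E ≤ ((β z - y z) / (2 * E)) * E :=
          mul_le_mul_of_nonneg_right (min_le_right _ _) hEpos.le
        have h3 : ((β z - y z) / (2 * E)) * E = (β z - y z) / 2 := by field_simp
        rw [h3] at h2
        have h4 : β z - y z ≤ (β z - y z) / 2 := le_trans h1 h2
        linarith
      refine ⟨min b' w, ⟨hsub ⟨(lt_min hxb' hw).le, min_le_left _ _⟩,
        hle _ ⟨(lt_min hxb' hw).le, min_le_left _ _⟩⟩, lt_min hxb' hw, min_le_right _ _⟩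
  exact fun r hr => (hmain hr).2
end
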